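/- arXiv:2312.10138 — 2 statements merged into one kernel-verified Lean document; each statement's English description precedes it below -/
import Mathlib

section
/- For β > 0 and real x, the regularized integral ∫₀^∞ ω^{β-1} e^{-iωx - ωε} dω converges for ε > 0 and its limit as ε → 0⁺ equals Γ(β)(-i)^β / (x - i0)^β, i.e. Γ(β) e^{-iπβ/2·sign(x)} |x|^{-β} when x ≠ 0. -/
open MeasureTheory Filter Topology Complex

/-!
For `Re z > 0` the Laplace transform `∫₀^∞ t^(a-1) e^(-z t) dt` equals `Γ(a) z^(-a)`: both sides
are holomorphic on the right half-plane (the left one by differentiating under the integral sign)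
and they agree for real `z > 0`, so they coincide by the identity theorem. Taking `z = ε + i x`,
the regularized integral is `Γ(β) (ε + i x)^(-β)`, which tends to `Γ(β) (i x)^(-β)` since the
principal power is continuous off the negative real axis, and `arg (i x) = π/2 · sign x`.
-/

open Set

lemma Real.integrableOn_rpow_mul_exp_neg_mul {s b : ℝ} (hs : -1 < s) (hb : 0 < b) :
    IntegrableOn (fun t : ℝ => t ^ s * Real.exp (-(b * t))) (Ioi 0) := by
  simpa using integrableOn_rpow_mul_exp_neg_mul_rpow hs one_pos hb

namespace Complex

lemma norm_cpow_mul_exp_neg_mul {t : ℝ} (ht : 0 < t) (a z : ℂ) :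
    ‖(t : ℂ) ^ (a - 1) * exp (-(z * t))‖ = t ^ (a.re - 1) * Real.exp (-(z.re * t)) := by
  rw [norm_mul, norm_cpow_eq_rpow_re_of_pos ht, norm_exp]
  simp

lemma continuousOn_cpow_mul_exp_neg_mul (a z : ℂ) :
    ContinuousOn (fun t : ℝ => (t : ℂ) ^ (a - 1) * exp (-(z * t))) (Ioi 0) := by
  refine ContinuousOn.mul (fun t ht => ?_) (by fun_prop)
  exact ((continuousAt_cpow_const (ofReal_mem_slitPlane.2 ht)).comp
    continuous_ofReal.continuousAt).continuousWithinAt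

lemma integrableOn_cpow_mul_exp_neg_mul {a z : ℂ} (ha : 0 < a.re) (hz : 0 < z.re) :
    IntegrableOn (fun t : ℝ => (t : ℂ) ^ (a - 1) * exp (-(z * t))) (Ioi 0) := by
  refine Integrable.mono' (Real.integrableOn_rpow_mul_exp_neg_mul (s := a.re - 1) (by linarith) hz)
    ((continuousOn_cpow_mul_exp_neg_mul a z).aestronglyMeasurable measurableSet_Ioi) ?_
  filter_upwards [ae_restrict_mem measurableSet_Ioi] with t ht
  exact (norm_cpow_mul_exp_neg_mul ht a z).le

lemma differentiableAt_integral_cpow_mul_exp_neg_mul {a z₀ : ℂ} (ha : 0 < a.re)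
    (hz₀ : 0 < z₀.re) :
    DifferentiableAt ℂ (fun z => ∫ t in Ioi (0 : ℝ), (t : ℂ) ^ (a - 1) * exp (-(z * t))) z₀ := by
  set δ := z₀.re / 2
  have hs : {z : ℂ | δ < z.re} ∈ 𝓝 z₀ :=
    (isOpen_lt continuous_const continuous_re).mem_nhds (by simp only [mem_ofPred_eq, δ]; linarith)
  have hmeas (z : ℂ) : AEStronglyMeasurable (fun t : ℝ => (t : ℂ) ^ (a - 1) * exp (-(z * t)))
      (volume.restrict (Ioi 0)) :=
    (continuousOn_cpow_mul_exp_neg_mul a z).aestronglyMeasurable measurableSet_Ioi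
  refine (hasDerivAt_integral_of_dominated_loc_of_deriv_le (μ := volume.restrict (Ioi 0))
    (F' := fun z (t : ℝ) => (t : ℂ) ^ (a - 1) * exp (-(z * t)) * -t)
    (bound := fun t => t ^ a.re * Real.exp (-(δ * t))) hs (.of_forall hmeas)
    (integrableOn_cpow_mul_exp_neg_mul ha hz₀)
    ((hmeas z₀).mul continuous_ofReal.neg.aestronglyMeasurable) ?_
    (Real.integrableOn_rpow_mul_exp_neg_mul (by linarith) (by positivity)) ?_).2.differentiableAt
  · filter_upwards [ae_restrict_mem measurableSet_Ioi] with t ht z hz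
    rw [norm_mul, norm_cpow_mul_exp_neg_mul ht, norm_neg, norm_real, Real.norm_of_nonneg ht.le,
      mul_right_comm, ← Real.rpow_add_one ht.ne', sub_add_cancel]
    gcongr
    exacts [(Real.rpow_pos_of_pos ht _).le, ht.le]
  · filter_upwards with t z _
    simpa [mul_assoc] using ((hasDerivAt_mul_const (t : ℂ)).neg.cexp).const_mul ((t : ℂ) ^ (a - 1))

theorem integral_cpow_mul_exp_neg_mul_Ioi_of_re_pos {a z : ℂ} (ha : 0 < a.re) (hz : 0 < z.re) :
    ∫ t in Ioi (0 : ℝ), (t : ℂ) ^ (a - 1) * exp (-(z * t)) = Gamma a * z ^ (-a) := by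
  have hU : IsOpen {w : ℂ | 0 < w.re} := isOpen_lt continuous_const continuous_re
  have hF : AnalyticOnNhd ℂ (fun w => ∫ t in Ioi (0 : ℝ), (t : ℂ) ^ (a - 1) * exp (-(w * t)))
      {w | 0 < w.re} := DifferentiableOn.analyticOnNhd
    (fun w hw => (differentiableAt_integral_cpow_mul_exp_neg_mul ha hw).differentiableWithinAt) hU
  have hG : AnalyticOnNhd ℂ (fun w => Gamma a * w ^ (-a)) {w | 0 < w.re} :=
    DifferentiableOn.analyticOnNhd (fun w hw =>
      ((differentiableAt_id.cpow_const (Or.inl hw)).const_mul _).differentiableWithinAt) hU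
  have h_real {r : ℝ} (hr : 0 < r) :
      ∫ t in Ioi (0 : ℝ), (t : ℂ) ^ (a - 1) * exp (-(r * t)) = Gamma a * (r : ℂ) ^ (-a) := by
    rw [integral_cpow_mul_exp_neg_mul_Ioi ha hr, one_div, inv_cpow _ _
      (by simp [arg_ofReal_of_nonneg hr.le, Real.pi_ne_zero.symm]), ← cpow_neg, mul_comm]
  have h_ofReal : Tendsto ((↑) : ℝ → ℂ) (𝓝[>] 1) (𝓝[≠] 1) :=
    tendsto_nhdsWithin_iff.2 ⟨(continuous_ofReal.tendsto' 1 1 ofReal_one).mono_left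
      nhdsWithin_le_nhds, eventually_nhdsWithin_of_forall fun r hr => by
        simpa using (mem_Ioi.1 hr).ne'⟩
  refine hF.eqOn_of_preconnected_of_frequently_eq hG (convex_halfSpace_re_gt 0).isPreconnected
    (by simp : (1 : ℂ) ∈ {w : ℂ | 0 < w.re}) ?_ hz
  have h_near_one : ∀ᶠ r in 𝓝[>] (1 : ℝ), _ :=
    eventually_nhdsWithin_of_forall fun r hr => h_real (one_pos.trans hr)
  exact h_ofReal.frequently h_near_one.frequently

theorem log_I_mul_ofReal {x : ℝ} (hx : x ≠ 0) :
    log (I * x) = Real.log |x| + Real.sign x * (Real.pi / 2) * I := by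
  rcases hx.lt_or_gt with h | h
  · rw [show I * x = ((|x| : ℝ) : ℂ) * -I by rw [abs_of_neg h]; push_cast; ring,
      log_ofReal_mul (abs_pos.2 hx) (neg_ne_zero.2 I_ne_zero), log_neg_I, Real.sign_of_neg h]
    push_cast; ring
  · rw [show I * x = ((|x| : ℝ) : ℂ) * I by rw [abs_of_pos h]; ring,
      log_ofReal_mul (abs_pos.2 hx) I_ne_zero, log_I, Real.sign_of_pos h]
    push_cast; ring

theorem I_mul_ofReal_cpow {x : ℝ} (hx : x ≠ 0) (w : ℂ) :
    (I * x) ^ w = exp (I * Real.pi * w / 2 * Real.sign x) * (|x| : ℝ) ^ w := by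
  rw [cpow_def_of_ne_zero (mul_ne_zero I_ne_zero (ofReal_ne_zero.2 hx)),
    cpow_def_of_ne_zero (ofReal_ne_zero.2 (abs_ne_zero.2 hx)), log_I_mul_ofReal hx,
    ← ofReal_log (abs_nonneg x), ← exp_add]
  ring_nf

end Complex

/-- For `β > 0` and real `x ≠ 0`, the regularized integral
`∫₀^∞ ω^{β-1} e^{-iωx - ωε} dω` converges for every `ε > 0` and its limit as
`ε → 0⁺` equals `Γ(β) e^{-iπβ/2 · sign x} |x|^{-β}`. -/
theorem stmt0 (β x : ℝ) (hβ : 0 < β) (hx : x ≠ 0) :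
    (∀ ε : ℝ, 0 < ε → IntegrableOn
      (fun ω : ℝ => (ω : ℂ) ^ ((β : ℂ) - 1) *
        Complex.exp (-Complex.I * ω * x - ω * ε)) (Set.Ioi 0)) ∧
    Tendsto (fun ε : ℝ => ∫ ω in Set.Ioi (0 : ℝ),
        (ω : ℂ) ^ ((β : ℂ) - 1) * Complex.exp (-Complex.I * ω * x - ω * ε))
      (𝓝[>] 0)
      (𝓝 (Complex.Gamma β *
        Complex.exp (-Complex.I * Real.pi * β / 2 * Real.sign x) *
        (|x| : ℝ) ^ (-(β : ℂ)))) := by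
  have hβ' : 0 < (β : ℂ).re := by simpa using hβ
  have h_re {ε : ℝ} (hε : 0 < ε) : 0 < ((ε : ℂ) + I * x).re := by simpa using hε
  have h_exponent (ε ω : ℝ) : -I * ω * x - ω * ε = -(((ε : ℂ) + I * x) * ω) := by ring
  simp only [h_exponent]
  refine ⟨fun ε hε => integrableOn_cpow_mul_exp_neg_mul hβ' (h_re hε), ?_⟩
  have h_lim : Tendsto (fun ε : ℝ => Gamma β * ((ε : ℂ) + I * x) ^ (-(β : ℂ))) (𝓝 0)
      (𝓝 (Gamma β * (I * x) ^ (-(β : ℂ)))) := by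
    refine ((continuousAt_cpow_const ?_).tendsto.comp ?_).const_mul _
    · simp [mem_slitPlane_iff, hx]
    · simpa using (by fun_prop : Continuous fun ε : ℝ => (ε : ℂ) + I * x).tendsto 0
  rw [mul_assoc, show exp (-I * Real.pi * β / 2 * Real.sign x) * (|x| : ℝ) ^ (-(β : ℂ)) =
      (I * x) ^ (-(β : ℂ)) by rw [I_mul_ofReal_cpow hx]; ring_nf]
  exact (h_lim.mono_left nhdsWithin_le_nhds).congr' (eventually_nhdsWithin_of_forall fun ε hε =>
    (integral_cpow_mul_exp_neg_mul_Ioi_of_re_pos hβ' (h_re hε)).symm)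
end

section
/- For positive integer k and real u ≠ 0, lim_{Δ→k} (Δ - k)·B(Δ - 1 + m, 1)·₁F₁(Δ + m - 1; Δ + m; -iu) equals (-iu)^{1-k-m}/(1-k-m)! when 0 ≤ m ≤ 1-k (with k ≤ 1, m ≥ 0 integers), and equals 0 when m > 1 - k. -/
open Filter Topology Complex

/-- The confluent hypergeometric function `₁F₁(a;b;z) = Σ (a)_n z^n / ((b)_n n!)`. -/
noncomputable def hyp1F1 (a b z : ℂ) : ℂ :=
  ∑' n : ℕ, ((ascPochhammer ℂ n).eval a / (ascPochhammer ℂ n).eval b) * z ^ n / n.factorial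

/-- The Euler Beta function `B(x,y) = Γ(x)Γ(y)/Γ(x+y)`. -/
noncomputable def eulerBeta (x y : ℂ) : ℂ :=
  Complex.Gamma x * Complex.Gamma y / Complex.Gamma (x + y)

/-!
With `ε = Δ - k` and `a = Δ + m - 1`, the Beta factor is `1/a` and `(a)ₙ/(a+1)ₙ = a/(a+n)`, so
`B(a,1)·₁F₁(a; a+1; z) = Σ zⁿ/((a+n) n!)`. Since `a + n = ε + (n - (1-k-m))`, the expression is
`Σ ε/(ε + (n - (1-k-m))) · zⁿ/n!`. As `ε → 0` the coefficient tends to `1` for `n = 1-k-m` and to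
`0` otherwise, and it is bounded by `1` for `|ε| < 1/2`, so dominated convergence for series
(Tannery's theorem) leaves only the term `n = 1-k-m`, when it exists.
-/

open Polynomial in
theorem ascPochhammer_eval_div_eval_add_one {a : ℂ} (ha : ∀ j : ℕ, a + j ≠ 0) (n : ℕ) :
    (ascPochhammer ℂ n).eval a / (ascPochhammer ℂ n).eval (a + 1) = a / (a + n) := by
  have hshift : a * (ascPochhammer ℂ n).eval (a + 1) = (ascPochhammer ℂ n).eval a * (a + n) := by
    rw [← ascPochhammer_succ_eval, ascPochhammer_succ_left]
    simp [eval_comp]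
  have hne : (ascPochhammer ℂ n).eval (a + 1) ≠ 0 := by
    rw [Ne, ascPochhammer_eval_eq_zero_iff]
    rintro ⟨j, -, hj⟩
    exact ha (j + 1) (by push_cast; linear_combination hj)
  rw [div_eq_div_iff hne (ha n), hshift]

theorem eulerBeta_one_right {x : ℂ} (hx : ∀ n : ℕ, x ≠ -n) : eulerBeta x 1 = x⁻¹ := by
  have hx0 : x ≠ 0 := by simpa using hx 0
  rw [eulerBeta, Complex.Gamma_one, Complex.Gamma_add_one x hx0, mul_one,
    div_mul_cancel_right₀ (Complex.Gamma_ne_zero hx)]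

theorem eulerBeta_one_right_mul_hyp1F1_self_add_one {a : ℂ} (ha : ∀ j : ℕ, a + j ≠ 0) (z : ℂ) :
    eulerBeta a 1 * hyp1F1 a (a + 1) z = ∑' n : ℕ, (a + n)⁻¹ * (z ^ n / n.factorial) := by
  rw [eulerBeta_one_right fun n h => ha n (by rw [h]; ring), hyp1F1, ← tsum_mul_left]
  congr 1
  funext n
  have ha0 : a ≠ 0 := by simpa using ha 0
  rw [ascPochhammer_eval_div_eval_add_one ha]
  field_simp [ha n]

theorem norm_div_add_intCast_le_one {ε : ℂ} (hε : ‖ε‖ < 1 / 2) (d : ℤ) :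
    ‖ε / (ε + d)‖ ≤ 1 := by
  rcases eq_or_ne d 0 with rfl | hd
  · simpa using div_self_le_one ‖ε‖
  have hd1 : (1 : ℝ) ≤ ‖(d : ℂ)‖ := by
    rw [Complex.norm_intCast]
    exact_mod_cast Int.one_le_abs hd
  have hle : ‖ε‖ ≤ ‖ε + d‖ := by
    have := norm_sub_le (ε + d) ε
    rw [add_sub_cancel_left] at this
    linarith
  rw [norm_div]
  exact div_le_one_of_le₀ hle (norm_nonneg _)

theorem tendsto_div_add_intCast (d : ℤ) :
    Tendsto (fun ε : ℂ => ε / (ε + d)) (𝓝[≠] 0) (𝓝 (if d = 0 then 1 else 0)) := by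
  split_ifs with hd
  · subst hd
    refine tendsto_const_nhds.congr' ?_
    filter_upwards [self_mem_nhdsWithin] with ε hε
    simp [div_self (show ε ≠ 0 from hε)]
  · have hcont : Tendsto (fun ε : ℂ => ε / (ε + d)) (𝓝 0) (𝓝 (0 / (0 + d))) :=
      tendsto_id.div (tendsto_id.add_const _) (by simpa using hd)
    simpa using hcont.mono_left nhdsWithin_le_nhds

theorem tsum_ite_sub_eq_zero_mul (N : ℤ) (w : ℕ → ℂ) :
    ∑' n : ℕ, (if (n : ℤ) - N = 0 then 1 else 0) * w n = if 0 ≤ N then w N.toNat else 0 := by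
  split_ifs with hN
  · obtain ⟨n₀, rfl⟩ := Int.eq_ofNat_of_zero_le hN
    simp [sub_eq_zero]
  · have hzero : ∀ n : ℕ, (n : ℤ) - N ≠ 0 := fun n => by omega
    simp [hzero]

theorem tendsto_tsum_mul_div_add_intCast (N : ℤ) (z : ℂ) :
    Tendsto (fun ε : ℂ => ∑' n : ℕ, ε / (ε + ((n : ℤ) - N : ℤ)) * (z ^ n / n.factorial))
      (𝓝[≠] 0) (𝓝 (if 0 ≤ N then z ^ N.toNat / N.toNat.factorial else 0)) := by
  rw [← tsum_ite_sub_eq_zero_mul N (fun n => z ^ n / n.factorial)]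
  refine tendsto_tsum_of_dominated_convergence (bound := fun n => ‖z‖ ^ n / n.factorial)
    (Real.summable_pow_div_factorial _) (fun n => (tendsto_div_add_intCast _).mul_const _) ?_
  filter_upwards [nhdsWithin_le_nhds (Metric.ball_mem_nhds (0 : ℂ) one_half_pos)] with ε hε n
  rw [norm_mul, norm_div (z ^ n), norm_pow, Complex.norm_natCast]
  exact mul_le_of_le_one_left (by positivity)
    (norm_div_add_intCast_le_one (mem_ball_zero_iff.mp hε) _)

theorem add_intCast_ne_zero {ε : ℂ} (hε₀ : ε ≠ 0) (hε : ‖ε‖ < 1) (d : ℤ) : ε + d ≠ 0 := by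
  intro h
  rw [add_eq_zero_iff_eq_neg.mp h, norm_neg, Complex.norm_intCast] at hε
  have hd : d = 0 := Int.abs_lt_one_iff.mp (by exact_mod_cast hε)
  simp [hd] at h
  exact hε₀ h

theorem stmt6_general (k : ℤ) (m : ℕ) (u : ℝ) :
    Tendsto (fun Δ : ℂ =>
        (Δ - (k : ℂ)) * eulerBeta (Δ - 1 + m) 1 *
          hyp1F1 (Δ + m - 1) (Δ + m) (-Complex.I * u))
      (𝓝[≠] (k : ℂ))
      (𝓝 (if (m : ℤ) ≤ 1 - k then
          (-Complex.I * u) ^ (1 - k - m).toNat / ((1 - k - m).toNat).factorial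
        else 0)) := by
  have hshift : Tendsto (fun Δ : ℂ => Δ - k) (𝓝[≠] (k : ℂ)) (𝓝[≠] 0) := by
    have h := Filter.map_subRight_nhdsNE (c := (k : ℂ)) (a := k)
    rw [sub_self] at h
    exact h.le
  simp only [← sub_nonneg (a := 1 - k) (b := (m : ℤ))]
  refine ((tendsto_tsum_mul_div_add_intCast (1 - k - m) _).comp hshift).congr' ?_
  filter_upwards [self_mem_nhdsWithin,
    nhdsWithin_le_nhds (Metric.ball_mem_nhds (k : ℂ) one_pos)] with Δ hne hball
  have hsplit : ∀ n : ℕ, Δ + m - 1 + n = (Δ - k) + ((n : ℤ) - (1 - k - m) : ℤ) := fun n => by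
    push_cast; ring
  have hpoles : ∀ n : ℕ, Δ + m - 1 + n ≠ 0 := fun n => hsplit n ▸
    add_intCast_ne_zero (sub_ne_zero.mpr hne) (by rwa [← dist_eq_norm]) _
  have hseries := eulerBeta_one_right_mul_hyp1F1_self_add_one hpoles (-Complex.I * u)
  rw [sub_add_cancel] at hseries
  rw [show Δ - 1 + m = Δ + m - 1 by ring, mul_assoc, hseries, ← tsum_mul_left]
  refine tsum_congr fun n => ?_
  rw [hsplit]
  exact mul_assoc _ _ _

/-- For integer `k ≤ 1`, nonnegative integer `m` and real `u ≠ 0`,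
`lim_{Δ→k} (Δ-k)·B(Δ-1+m,1)·₁F₁(Δ+m-1; Δ+m; -iu)` equals
`(-iu)^{1-k-m}/(1-k-m)!` when `m ≤ 1-k`, and `0` when `m > 1-k`. -/
theorem stmt6 (k : ℤ) (hk : k ≤ 1) (m : ℕ) (u : ℝ) (hu : u ≠ 0) :
    Tendsto (fun Δ : ℂ =>
        (Δ - (k : ℂ)) * eulerBeta (Δ - 1 + m) 1 *
          hyp1F1 (Δ + m - 1) (Δ + m) (-Complex.I * u))
      (𝓝[≠] (k : ℂ))
      (𝓝 (if (m : ℤ) ≤ 1 - k then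
          (-Complex.I * u) ^ (1 - k - m).toNat / ((1 - k - m).toNat).factorial
        else 0)) :=
  stmt6_general k m u
end
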